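/- arXiv:2312.04927 — 5 statements merged into one kernel-verified Lean document; each statement's English description precedes it below -/
import Mathlib

section
/- For every N, d ≥ 1 and every 0 ≤ s < N, there exist BaseConv parameters depending only on N, d, s — explicitly W = 0, b₁ the all-ones matrix, b₂ = 0, and h the matrix whose row s is the all-ones row and all other rows are zero — such that the resulting single BaseConv layer (with causal convolution) computes y ↦ shift_down(y, s) for all y ∈ ℝ^{N×d}. -/
/-- Column-wise causal convolution: `(h ∗ u)[i,j] = ∑_{k=0}^{i} h[k,j] · u[i−k,j]`. -/
noncomputable def causalConv {N d : ℕ} (h u : Matrix (Fin N) (Fin d) ℝ) :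
    Matrix (Fin N) (Fin d) ℝ :=
  Matrix.of fun i j => ∑ k : Fin N,
    if k.val ≤ i.val then
      h k j * u ⟨i.val - k.val, lt_of_le_of_lt (Nat.sub_le _ _) i.isLt⟩ j
    else 0

/-- A BaseConv layer with parameters `(W, h, b₁, b₂)` maps
`u` to `(u·W + b₁) ⊙ (h ∗ u + b₂)`. -/
noncomputable def baseConv {N d : ℕ} (W : Matrix (Fin d) (Fin d) ℝ)
    (h b1 b2 : Matrix (Fin N) (Fin d) ℝ) (u : Matrix (Fin N) (Fin d) ℝ) :
    Matrix (Fin N) (Fin d) ℝ :=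
  Matrix.hadamard (u * W + b1) (causalConv h u + b2)

/-- `shift_down(y, s)[i,:] = y[i−s,:]` for `i ≥ s`, and the zero row otherwise. -/
noncomputable def shiftDown {N d : ℕ} (y : Matrix (Fin N) (Fin d) ℝ) (s : ℕ) :
    Matrix (Fin N) (Fin d) ℝ :=
  Matrix.of fun i j =>
    if h : s ≤ i.val then y ⟨i.val - s, lt_of_le_of_lt (Nat.sub_le _ _) i.isLt⟩ j else 0

/-- A single BaseConv layer with `W = 0`, `b₁` all-ones, `b₂ = 0`, and filter `h`
whose row `s` is all ones (other rows zero) computes `y ↦ shift_down(y, s)`. -/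
theorem stmt_1 (N d s : ℕ) (hN : 1 ≤ N) (hd : 1 ≤ d) (hs : s < N) :
    ∀ y : Matrix (Fin N) (Fin d) ℝ,
      baseConv 0 (Matrix.of fun k _ => if k.val = s then (1 : ℝ) else 0)
        (Matrix.of fun _ _ => (1 : ℝ)) 0 y = shiftDown y s := by
  intro y
  ext i j
  simp only [baseConv, causalConv, shiftDown, Matrix.hadamard, Matrix.mul_zero,
    Matrix.add_apply, Matrix.zero_apply, Matrix.of_apply, add_zero, zero_add, one_mul]
  rw [Finset.sum_eq_single (⟨s, hs⟩ : Fin N)]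
  · by_cases h : s ≤ i.val <;> simp [h]
  · intro b _ hb
    have : b.val ≠ s := fun e => hb (Fin.ext e)
    simp [this]
  · simp
end

section
/- For every N, d ≥ 1 and every 0 ≤ s < N, there exists a composition of at most three BaseConv layers, each permitted to use either causal or circular column-wise convolution, with parameters depending only on N, d, s, that computes y ↦ shift_up(y, s) for all y ∈ ℝ^{N×d}. -/
/-- Column-wise circular convolution: `(h ⊛ u)[i,j] = ∑_{k} h[k,j] · u[(i−k) mod N, j]`. -/
noncomputable def circConv {N d : ℕ} (h u : Matrix (Fin N) (Fin d) ℝ) :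
    Matrix (Fin N) (Fin d) ℝ :=
  Matrix.of fun i j => ∑ k : Fin N, h k j * u (i - k) j

/-- A BaseConv layer, permitted to use either causal or circular convolution. -/
structure BCLayer (N d : ℕ) where
  circ : Bool
  W : Matrix (Fin d) (Fin d) ℝ
  h : Matrix (Fin N) (Fin d) ℝ
  b1 : Matrix (Fin N) (Fin d) ℝ
  b2 : Matrix (Fin N) (Fin d) ℝ

noncomputable def BCLayer.apply {N d : ℕ} (L : BCLayer N d)
    (u : Matrix (Fin N) (Fin d) ℝ) : Matrix (Fin N) (Fin d) ℝ :=
  Matrix.hadamard (u * L.W + L.b1)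
    ((if L.circ then circConv L.h u else causalConv L.h u) + L.b2)

noncomputable def applyLayers {N d : ℕ} (Ls : List (BCLayer N d))
    (u : Matrix (Fin N) (Fin d) ℝ) : Matrix (Fin N) (Fin d) ℝ :=
  Ls.foldl (fun a L => L.apply a) u

/-- `shift_up(y, s)[i,:] = y[i+s,:]` for `i ≤ N−1−s`, and the zero row otherwise. -/
noncomputable def shiftUp {N d : ℕ} (y : Matrix (Fin N) (Fin d) ℝ) (s : ℕ) :
    Matrix (Fin N) (Fin d) ℝ :=
  Matrix.of fun i j => if h : i.val + s < N then y ⟨i.val + s, h⟩ j else 0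

/-- A composition of at most three BaseConv layers (each causal or circular)
computes `y ↦ shift_up(y, s)`. -/
theorem stmt_2 (N d s : ℕ) (hN : 1 ≤ N) (hd : 1 ≤ d) (hs : s < N) :
    ∃ Ls : List (BCLayer N d), Ls.length ≤ 3 ∧
      ∀ y : Matrix (Fin N) (Fin d) ℝ, applyLayers Ls y = shiftUp y s := by
  have hm : (N - s) % N < N := Nat.mod_lt _ hN
  set k0 : Fin N := ⟨(N - s) % N, hm⟩ with hk0
  refine ⟨[⟨true, 0, Matrix.of fun k _ => if k = k0 then (1:ℝ) else 0,
      Matrix.of fun i _ => if i.val + s < N then (1:ℝ) else 0, 0⟩], by simp, ?_⟩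
  intro y
  simp only [applyLayers, List.foldl, BCLayer.apply, if_pos]
  ext i j
  simp only [Matrix.hadamard_apply, Matrix.mul_zero, Matrix.add_apply,
    Matrix.zero_apply, zero_add, add_zero, Matrix.of_apply, circConv, shiftUp]
  have hsum : (∑ k : Fin N, (if k = k0 then (1:ℝ) else 0) * y (i - k) j)
      = y (i - k0) j := by
    rw [Finset.sum_eq_single k0]
    · simp
    · intro b _ hb; simp [hb]
    · intro h; exact absurd (Finset.mem_univ k0) h
  rw [hsum]
  have hval : (i - k0).val = (i.val + s) % N := by
    rw [Fin.sub_def]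
    simp only [hk0]
    rcases Nat.eq_or_lt_of_le (Nat.zero_le s) with h0 | hpos
    · simp [← h0, Nat.mod_self, Nat.mod_eq_of_lt i.isLt]
    · have : (N - s) % N = N - s := Nat.mod_eq_of_lt (by omega)
      rw [this, Nat.sub_sub_self hs.le, Nat.add_comm]
  by_cases hiN : i.val + s < N
  · rw [if_pos hiN, dif_pos hiN, one_mul]
    congr 1
    exact Fin.ext (by rw [hval]; exact Nat.mod_eq_of_lt hiN)
  · rw [if_neg hiN, dif_neg hiN, zero_mul]
end

section
/- For all N, n, d ≥ 1 with 2n ≤ N, there exists a composition of two BaseConv layers, with parameters depending only on N, n, d (and not on the input), such that for every input y ∈ ℝ^{N×d} whose rows 0 through n−1 form a matrix x ∈ ℝ^{n×d}, whose rows n through 2n−1 form a matrix S ∈ ℝ^{n×d}, and whose remaining rows are zero, the output z ∈ ℝ^{N×d} has rows 0 through n−1 all equal to the all-ones row, rows n through 2n−1 equal to S + x, and all remaining rows zero. -/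
section

variable {N d : ℕ}

/-- The filter `δₐ`; it is the zero filter when `N ≤ a`. -/
def shiftFilter (N d a : ℕ) : Matrix (Fin N) (Fin d) ℝ :=
  Matrix.of fun k _ => if k.val = a then 1 else 0

def rowMask (N d a b : ℕ) : Matrix (Fin N) (Fin d) ℝ :=
  Matrix.of fun i _ => if a ≤ i.val ∧ i.val < b then 1 else 0

theorem causalConv_add_left (h h' u : Matrix (Fin N) (Fin d) ℝ) :
    causalConv (h + h') u = causalConv h u + causalConv h' u := by
  ext i j
  simp only [causalConv, Matrix.of_apply, Matrix.add_apply, ← Finset.sum_add_distrib]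
  refine Finset.sum_congr rfl fun k _ => ?_
  split_ifs <;> ring

theorem causalConv_shiftFilter_apply (a : ℕ) (u : Matrix (Fin N) (Fin d) ℝ) (i : Fin N)
    (j : Fin d) :
    causalConv (shiftFilter N d a) u i j
      = if h : a ≤ i.val then u ⟨i.val - a, by omega⟩ j else 0 := by
  simp only [causalConv, shiftFilter, Matrix.of_apply, ite_mul, one_mul, zero_mul]
  split_ifs with h
  · refine (Finset.sum_eq_single ⟨a, by omega⟩ (fun k _ hk => ?_) (by simp)).trans (by simp [h])
    simp [Fin.ext_iff.not.mp hk]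
  · exact Finset.sum_eq_zero fun k _ => by split_ifs <;> first | rfl | omega

theorem causalConv_shiftFilter_zero (u : Matrix (Fin N) (Fin d) ℝ) :
    causalConv (shiftFilter N d 0) u = u := by
  ext i j
  simp [causalConv_shiftFilter_apply]

theorem baseConv_zero_apply (h b₁ b₂ u : Matrix (Fin N) (Fin d) ℝ) (i : Fin N) (j : Fin d) :
    baseConv 0 h b₁ b₂ u i j = b₁ i j * (causalConv h u i j + b₂ i j) := by
  simp [baseConv]

theorem baseConv_add_shifted_apply (n : ℕ) (u : Matrix (Fin N) (Fin d) ℝ) (i : Fin N)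
    (j : Fin d) :
    baseConv 0 (shiftFilter N d 0 + shiftFilter N d n) (rowMask N d n (2 * n)) 0 u i j
      = if h : n ≤ i.val ∧ i.val < 2 * n then u i j + u ⟨i.val - n, by omega⟩ j else 0 := by
  simp only [baseConv_zero_apply, causalConv_add_left, Matrix.add_apply,
    causalConv_shiftFilter_apply, rowMask, Matrix.of_apply, Matrix.zero_apply, add_zero]
  split_ifs with h <;> simp_all

theorem baseConv_add_bias (b z : Matrix (Fin N) (Fin d) ℝ) :
    baseConv 0 (shiftFilter N d 0) (Matrix.of fun _ _ => 1) b z = z + b := by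
  ext i j
  simp [baseConv_zero_apply, causalConv_shiftFilter_zero]

end

/-- There are two BaseConv layers, with parameters depending only on `N, n, d`,
mapping any input of the form `(x; S; 0)` (rows `0..n−1` equal `x`, rows `n..2n−1`
equal `S`, remaining rows zero) to `(1; S + x; 0)`. -/
theorem stmt_3 (N n d : ℕ) :
    ∃ (W1 W2 : Matrix (Fin d) (Fin d) ℝ)
      (h1 b11 b12 h2 b21 b22 : Matrix (Fin N) (Fin d) ℝ),
      ∀ x S : Matrix (Fin n) (Fin d) ℝ,
        baseConv W2 h2 b21 b22 (baseConv W1 h1 b11 b12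
            (Matrix.of fun (i : Fin N) j =>
              if hi : i.val < n then x ⟨i.val, hi⟩ j
              else if hi2 : i.val < 2 * n then S ⟨i.val - n, by omega⟩ j
              else 0))
          = Matrix.of fun (i : Fin N) j =>
              if i.val < n then (1 : ℝ)
              else if hi2 : i.val < 2 * n then (S + x) ⟨i.val - n, by omega⟩ j
              else 0 := by
  refine ⟨0, 0, shiftFilter N d 0 + shiftFilter N d n, rowMask N d n (2 * n), 0,
    shiftFilter N d 0, Matrix.of fun _ _ => 1, rowMask N d 0 n, fun x S => ?_⟩
  rw [baseConv_add_bias]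
  ext i j
  rw [Matrix.add_apply, baseConv_add_shifted_apply]
  simp only [rowMask, Matrix.of_apply]
  by_cases hi : i.val < n
  · simp [hi]
  · by_cases hi2 : i.val < 2 * n
    · simp [hi, hi2, not_lt.mp hi, show i.val - n < n by omega]
    · simp [hi, hi2]
end

section
/- Fix c ≥ 1 and N divisible by 3, and let u ∈ {0,1}^{N×3c} encode an MQAR instance: u[3r,:] = [k_r : 0^c : 0^c], u[3r+1,:] = [0^c : v_r : 0^c], u[3r+2,:] = [0^c : 0^c : q_r] for 0 ≤ r < N/3, where each k_r, v_r, q_r is a standard basis vector of ℝ^c, and assume the keys k_0, …, k_{N/3−1} are pairwise distinct. Then there exist matrices W_V¹, W_Q², W_K², W_V² ∈ ℝ^{3c×3c} and a 0/1 matrix B¹ ∈ ℝ^{N×N}, all independent of the input tokens, such that defining O¹ = B¹·(u·W_V¹), u² = u + O¹, and O² = (u²·W_Q²)·(u²·W_K²)ᵀ·(u²·W_V²), the output satisfies: for every query position i = 3r+2, O²[i,:] = [v_j : 0^c : 0^c] if there exists j with k_j = q_r (where v_j is the value paired with key k_j), and O²[i,:] = 0 if no such j exists; and O²[i,:] = 0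 for every non-query position i. -/
open Matrix

/-- The vector `[a : b : c] ∈ ℝ^{3c}` that is zero except for a one-hot token `t`
placed in block `block ∈ {0,1,2}`. -/
noncomputable def oneHot3 (c : ℕ) (block : ℕ) (t : Fin c) : Fin (3 * c) → ℝ :=
  fun j => if j.val = block * c + t.val then 1 else 0

lemma oneHot3_dot (c b : ℕ) (t : Fin c) (h : b * c + t.val < 3 * c) (f : Fin (3 * c) → ℝ) :
    (∑ k, oneHot3 c b t k * f k) = f ⟨b * c + t.val, h⟩ := by
  rw [Finset.sum_eq_single (⟨b * c + t.val, h⟩ : Fin (3 * c))]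
  · simp [oneHot3]
  · intro k _ hk
    have hk' : ¬ (k.val = b * c + t.val) := fun hh => hk (Fin.ext hh)
    simp [oneHot3, hk']
  · simp

noncomputable def Wv1 (c : ℕ) : Matrix (Fin (3 * c)) (Fin (3 * c)) ℝ :=
  fun p j => if p = j ∧ c ≤ (p : ℕ) ∧ (p : ℕ) < 2 * c then 1 else 0

noncomputable def Wq2 (c : ℕ) : Matrix (Fin (3 * c)) (Fin (3 * c)) ℝ :=
  fun p j => if (p : ℕ) = (j : ℕ) + 2 * c then 1 else 0

noncomputable def Wk2 (c : ℕ) : Matrix (Fin (3 * c)) (Fin (3 * c)) ℝ :=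
  fun p j => if p = j ∧ (p : ℕ) < c then 1 else 0

noncomputable def Wv2 (c : ℕ) : Matrix (Fin (3 * c)) (Fin (3 * c)) ℝ :=
  fun p j => if (p : ℕ) = (j : ℕ) + c ∧ (j : ℕ) < c then 1 else 0

noncomputable def Bmat (R : ℕ) : Matrix (Fin (3 * R)) (Fin (3 * R)) ℝ :=
  fun i l => if (l : ℕ) = (i : ℕ) + 1 ∧ (i : ℕ) % 3 = 0 then 1 else 0

section rows
variable (c : ℕ) (t : Fin c)

lemma Wv1_b0 (h : 0 * c + t.val < 3 * c) (j : Fin (3 * c)) :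
    Wv1 c ⟨0 * c + t.val, h⟩ j = 0 := by
  have ht := t.isLt
  simp only [Wv1]
  rw [if_neg]
  rintro ⟨-, h2, -⟩
  omega

lemma Wv1_b1 (h : 1 * c + t.val < 3 * c) (j : Fin (3 * c)) :
    Wv1 c ⟨1 * c + t.val, h⟩ j = oneHot3 c 1 t j := by
  have ht := t.isLt
  simp only [Wv1, oneHot3, Fin.ext_iff, Fin.val_mk]
  by_cases hj : (j : ℕ) = 1 * c + t.val
  · rw [if_pos ⟨hj.symm, by omega⟩, if_pos hj]
  · rw [if_neg (by rintro ⟨h1, -⟩; exact hj h1.symm), if_neg hj]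

lemma Wv1_b2 (h : 2 * c + t.val < 3 * c) (j : Fin (3 * c)) :
    Wv1 c ⟨2 * c + t.val, h⟩ j = 0 := by
  have ht := t.isLt
  simp only [Wv1]
  rw [if_neg]
  rintro ⟨-, -, h3⟩
  omega

lemma Wq2_b0 (h : 0 * c + t.val < 3 * c) (j : Fin (3 * c)) :
    Wq2 c ⟨0 * c + t.val, h⟩ j = 0 := by
  have ht := t.isLt
  have hj := j.isLt
  simp only [Wq2, Fin.val_mk]
  rw [if_neg]
  omega

lemma Wq2_b1 (h : 1 * c + t.val < 3 * c) (j : Fin (3 * c)) :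
    Wq2 c ⟨1 * c + t.val, h⟩ j = 0 := by
  have ht := t.isLt
  simp only [Wq2, Fin.val_mk]
  rw [if_neg]
  omega

lemma Wq2_b2 (h : 2 * c + t.val < 3 * c) (j : Fin (3 * c)) :
    Wq2 c ⟨2 * c + t.val, h⟩ j = oneHot3 c 0 t j := by
  have ht := t.isLt
  simp only [Wq2, oneHot3, Fin.val_mk]
  by_cases hj : (j : ℕ) = 0 * c + t.val
  · rw [if_pos (by omega), if_pos hj]
  · rw [if_neg (by omega), if_neg hj]

lemma Wk2_b0 (h : 0 * c + t.val < 3 * c) (j : Fin (3 * c)) :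
    Wk2 c ⟨0 * c + t.val, h⟩ j = oneHot3 c 0 t j := by
  have ht := t.isLt
  simp only [Wk2, oneHot3, Fin.ext_iff, Fin.val_mk]
  by_cases hj : (j : ℕ) = 0 * c + t.val
  · rw [if_pos ⟨hj.symm, by omega⟩, if_pos hj]
  · rw [if_neg (by rintro ⟨h1, -⟩; exact hj h1.symm), if_neg hj]

lemma Wk2_b1 (h : 1 * c + t.val < 3 * c) (j : Fin (3 * c)) :
    Wk2 c ⟨1 * c + t.val, h⟩ j = 0 := by
  have ht := t.isLt
  simp only [Wk2]
  rw [if_neg]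
  rintro ⟨-, h2⟩
  omega

lemma Wk2_b2 (h : 2 * c + t.val < 3 * c) (j : Fin (3 * c)) :
    Wk2 c ⟨2 * c + t.val, h⟩ j = 0 := by
  have ht := t.isLt
  simp only [Wk2]
  rw [if_neg]
  rintro ⟨-, h2⟩
  omega

lemma Wv2_b0 (h : 0 * c + t.val < 3 * c) (j : Fin (3 * c)) :
    Wv2 c ⟨0 * c + t.val, h⟩ j = 0 := by
  have ht := t.isLt
  simp only [Wv2, Fin.val_mk]
  rw [if_neg]
  rintro ⟨h1, -⟩
  omega

lemma Wv2_b1 (h : 1 * c + t.val < 3 * c) (j : Fin (3 * c)) :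
    Wv2 c ⟨1 * c + t.val, h⟩ j = oneHot3 c 0 t j := by
  have ht := t.isLt
  simp only [Wv2, oneHot3, Fin.val_mk]
  by_cases hj : (j : ℕ) = 0 * c + t.val
  · rw [if_pos ⟨by omega, by omega⟩, if_pos hj]
  · rw [if_neg (by rintro ⟨h1, -⟩; exact hj (by omega)), if_neg hj]

lemma Wv2_b2 (h : 2 * c + t.val < 3 * c) (j : Fin (3 * c)) :
    Wv2 c ⟨2 * c + t.val, h⟩ j = 0 := by
  have ht := t.isLt
  simp only [Wv2, Fin.val_mk]
  rw [if_neg]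
  rintro ⟨h1, h2⟩
  omega

end rows

lemma mul_row_one {n c : ℕ} (M : Matrix (Fin n) (Fin (3 * c)) ℝ)
    (W : Matrix (Fin (3 * c)) (Fin (3 * c)) ℝ) (i : Fin n) (b : ℕ) (t : Fin c)
    (h : b * c + t.val < 3 * c) (hrow : ∀ j, M i j = oneHot3 c b t j) :
    ∀ j, (M * W) i j = W ⟨b * c + t.val, h⟩ j := by
  intro j
  rw [Matrix.mul_apply,
    show (∑ k, M i k * W k j) = ∑ k, oneHot3 c b t k * W k j from
      Finset.sum_congr rfl fun k _ => by rw [hrow k]]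
  exact oneHot3_dot c b t h _

lemma mul_row_two {n c : ℕ} (M : Matrix (Fin n) (Fin (3 * c)) ℝ)
    (W : Matrix (Fin (3 * c)) (Fin (3 * c)) ℝ) (i : Fin n) (b1 b2 : ℕ) (t1 t2 : Fin c)
    (h1 : b1 * c + t1.val < 3 * c) (h2 : b2 * c + t2.val < 3 * c)
    (hrow : ∀ j, M i j = oneHot3 c b1 t1 j + oneHot3 c b2 t2 j) :
    ∀ j, (M * W) i j = W ⟨b1 * c + t1.val, h1⟩ j + W ⟨b2 * c + t2.val, h2⟩ j := by
  intro j
  rw [Matrix.mul_apply,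
    show (∑ k, M i k * W k j)
        = ∑ k, (oneHot3 c b1 t1 k * W k j + oneHot3 c b2 t2 k * W k j) from
      Finset.sum_congr rfl fun k _ => by rw [hrow k, add_mul],
    Finset.sum_add_distrib, oneHot3_dot c b1 t1 h1, oneHot3_dot c b2 t2 h2]

lemma mul_row_zero {n c : ℕ} (M : Matrix (Fin n) (Fin (3 * c)) ℝ)
    (W : Matrix (Fin (3 * c)) (Fin (3 * c)) ℝ) (i : Fin n)
    (hrow : ∀ j, M i j = 0) :
    ∀ j, (M * W) i j = 0 := by
  intro j
  rw [Matrix.mul_apply]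
  exact Finset.sum_eq_zero fun k _ => by rw [hrow k, zero_mul]

lemma tri (R : ℕ) (l : Fin (3 * R)) :
    ∃ s : Fin R, l.val = 3 * s.val ∨ l.val = 3 * s.val + 1 ∨ l.val = 3 * s.val + 2 := by
  refine ⟨⟨l.val / 3, by have := l.isLt; omega⟩, ?_⟩
  simp only [Fin.val_mk]
  omega

/-- Two-layer attention without softmax solves MQAR: there are fixed projection
matrices `W_V¹, W_Q², W_K², W_V²` and a fixed 0/1 bias matrix `B¹` (independent of
the tokens) such that with `O¹ = B¹·(u·W_V¹)`, `u² = u + O¹`, and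
`O² = (u²·W_Q²)·(u²·W_K²)ᵀ·(u²·W_V²)`, every query row `3r+2` of `O²` equals
`[v_j : 0 : 0]` for the key `k_j` matching `q_r` (zero if no key matches), and
every non-query row of `O²` is zero. -/
theorem stmt_13 (c R : ℕ) (hc : 1 ≤ c) :
    ∃ (WV1 WQ2 WK2 WV2 : Matrix (Fin (3 * c)) (Fin (3 * c)) ℝ)
      (B1 : Matrix (Fin (3 * R)) (Fin (3 * R)) ℝ),
      (∀ i j, B1 i j = 0 ∨ B1 i j = 1) ∧
      ∀ (u : Matrix (Fin (3 * R)) (Fin (3 * c)) ℝ) (kk vv qq : Fin R → Fin c),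
        (∀ r : Fin R,
          u ⟨3 * r.val, by have := r.isLt; omega⟩ = oneHot3 c 0 (kk r) ∧
          u ⟨3 * r.val + 1, by have := r.isLt; omega⟩ = oneHot3 c 1 (vv r) ∧
          u ⟨3 * r.val + 2, by have := r.isLt; omega⟩ = oneHot3 c 2 (qq r)) →
        Function.Injective kk →
        (let O1 : Matrix (Fin (3 * R)) (Fin (3 * c)) ℝ := B1 * (u * WV1);
         let u2 : Matrix (Fin (3 * R)) (Fin (3 * c)) ℝ := u + O1;
         let O2 : Matrix (Fin (3 * R)) (Fin (3 * c)) ℝ :=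
           (u2 * WQ2) * (u2 * WK2)ᵀ * (u2 * WV2);
         (∀ r : Fin R,
            (∀ j : Fin R, kk j = qq r →
              O2 ⟨3 * r.val + 2, by have := r.isLt; omega⟩ = oneHot3 c 0 (vv j)) ∧
            ((¬ ∃ j : Fin R, kk j = qq r) →
              O2 ⟨3 * r.val + 2, by have := r.isLt; omega⟩ = 0)) ∧
         (∀ i : Fin (3 * R), (¬ ∃ r : Fin R, i.val = 3 * r.val + 2) → O2 i = 0)) := by
  refine ⟨Wv1 c, Wq2 c, Wk2 c, Wv2 c, Bmat R, ?_, ?_⟩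
  · intro i j
    by_cases h : ((j : ℕ) = (i : ℕ) + 1 ∧ (i : ℕ) % 3 = 0)
    · right; simp [Bmat, h]
    · left; simp [Bmat, h]
  intro u kk vv qq hu hinj
  have hb0 : ∀ t : Fin c, 0 * c + t.val < 3 * c := fun t => by have := t.isLt; omega
  have hb1 : ∀ t : Fin c, 1 * c + t.val < 3 * c := fun t => by have := t.isLt; omega
  have hb2 : ∀ t : Fin c, 2 * c + t.val < 3 * c := fun t => by have := t.isLt; omega
  have hr0 : ∀ r : Fin R, 3 * r.val < 3 * R := fun r => by have := r.isLt; omega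
  have hr1 : ∀ r : Fin R, 3 * r.val + 1 < 3 * R := fun r => by have := r.isLt; omega
  have hr2 : ∀ r : Fin R, 3 * r.val + 2 < 3 * R := fun r => by have := r.isLt; omega
  -- rows of u * Wv1
  have hA0 : ∀ (r : Fin R) (j), (u * Wv1 c) ⟨3 * r.val, hr0 r⟩ j = 0 := by
    intro r j
    have h := mul_row_one u (Wv1 c) _ 0 (kk r) (hb0 (kk r)) (fun j' => congrFun (hu r).1 j') j
    exact h.trans (Wv1_b0 c (kk r) _ j)
  have hA1 : ∀ (r : Fin R) (j),
      (u * Wv1 c) ⟨3 * r.val + 1, hr1 r⟩ j = oneHot3 c 1 (vv r) j := by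
    intro r j
    have h := mul_row_one u (Wv1 c) _ 1 (vv r) (hb1 (vv r)) (fun j' => congrFun (hu r).2.1 j') j
    exact h.trans (Wv1_b1 c (vv r) _ j)
  -- rows of O1 = Bmat * (u * Wv1)
  have hBkey : ∀ (r : Fin R) (j),
      (Bmat R * (u * Wv1 c)) ⟨3 * r.val, hr0 r⟩ j = oneHot3 c 1 (vv r) j := by
    intro r j
    rw [Matrix.mul_apply]
    rw [Finset.sum_eq_single (⟨3 * r.val + 1, hr1 r⟩ : Fin (3 * R))]
    · rw [show Bmat R ⟨3 * r.val, hr0 r⟩ ⟨3 * r.val + 1, hr1 r⟩ = 1 from by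
        simp [Bmat, Nat.mul_mod_right], one_mul]
      exact hA1 r j
    · intro l _ hl
      have hl' : (l : ℕ) ≠ 3 * r.val + 1 := fun hh => hl (Fin.ext hh)
      rw [show Bmat R ⟨3 * r.val, hr0 r⟩ l = 0 from by simp [Bmat, hl'], zero_mul]
    · intro h; exact absurd (Finset.mem_univ _) h
  have hBnon : ∀ (i : Fin (3 * R)), (i : ℕ) % 3 ≠ 0 →
      ∀ j, (Bmat R * (u * Wv1 c)) i j = 0 := by
    intro i hi j
    rw [Matrix.mul_apply]
    refine Finset.sum_eq_zero fun l _ => ?_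
    rw [show Bmat R i l = 0 from by simp [Bmat, hi], zero_mul]
  -- rows of u2
  have hu2_0 : ∀ (r : Fin R) (j), (u + Bmat R * (u * Wv1 c)) ⟨3 * r.val, hr0 r⟩ j
      = oneHot3 c 0 (kk r) j + oneHot3 c 1 (vv r) j := by
    intro r j
    rw [Matrix.add_apply, hBkey r j]
    exact congrArg (· + _) (congrFun (hu r).1 j)
  have hu2_1 : ∀ (r : Fin R) (j), (u + Bmat R * (u * Wv1 c)) ⟨3 * r.val + 1, hr1 r⟩ j
      = oneHot3 c 1 (vv r) j := by
    intro r j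
    rw [Matrix.add_apply, hBnon _ (by simp only [Fin.val_mk]; omega) j, add_zero]
    exact congrFun (hu r).2.1 j
  have hu2_2 : ∀ (r : Fin R) (j), (u + Bmat R * (u * Wv1 c)) ⟨3 * r.val + 2, hr2 r⟩ j
      = oneHot3 c 2 (qq r) j := by
    intro r j
    rw [Matrix.add_apply, hBnon _ (by simp only [Fin.val_mk]; omega) j, add_zero]
    exact congrFun (hu r).2.2 j
  -- rows of Q, K, V
  have hQ0 : ∀ (r : Fin R) (j),
      ((u + Bmat R * (u * Wv1 c)) * Wq2 c) ⟨3 * r.val, hr0 r⟩ j = 0 := by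
    intro r j
    have h := mul_row_two _ (Wq2 c) _ 0 1 (kk r) (vv r) (hb0 (kk r)) (hb1 (vv r)) (hu2_0 r) j
    rw [h, Wq2_b0 c (kk r) _ j, Wq2_b1 c (vv r) _ j, add_zero]
  have hQ1 : ∀ (r : Fin R) (j),
      ((u + Bmat R * (u * Wv1 c)) * Wq2 c) ⟨3 * r.val + 1, hr1 r⟩ j = 0 := by
    intro r j
    have h := mul_row_one _ (Wq2 c) _ 1 (vv r) (hb1 (vv r)) (hu2_1 r) j
    exact h.trans (Wq2_b1 c (vv r) _ j)
  have hQ2 : ∀ (r : Fin R) (j),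
      ((u + Bmat R * (u * Wv1 c)) * Wq2 c) ⟨3 * r.val + 2, hr2 r⟩ j
        = oneHot3 c 0 (qq r) j := by
    intro r j
    have h := mul_row_one _ (Wq2 c) _ 2 (qq r) (hb2 (qq r)) (hu2_2 r) j
    exact h.trans (Wq2_b2 c (qq r) _ j)
  have hK0 : ∀ (r : Fin R) (j),
      ((u + Bmat R * (u * Wv1 c)) * Wk2 c) ⟨3 * r.val, hr0 r⟩ j
        = oneHot3 c 0 (kk r) j := by
    intro r j
    have h := mul_row_two _ (Wk2 c) _ 0 1 (kk r) (vv r) (hb0 (kk r)) (hb1 (vv r)) (hu2_0 r) j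
    rw [h, Wk2_b0 c (kk r) _ j, Wk2_b1 c (vv r) _ j, add_zero]
  have hK1 : ∀ (r : Fin R) (j),
      ((u + Bmat R * (u * Wv1 c)) * Wk2 c) ⟨3 * r.val + 1, hr1 r⟩ j = 0 := by
    intro r j
    have h := mul_row_one _ (Wk2 c) _ 1 (vv r) (hb1 (vv r)) (hu2_1 r) j
    exact h.trans (Wk2_b1 c (vv r) _ j)
  have hK2 : ∀ (r : Fin R) (j),
      ((u + Bmat R * (u * Wv1 c)) * Wk2 c) ⟨3 * r.val + 2, hr2 r⟩ j = 0 := by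
    intro r j
    have h := mul_row_one _ (Wk2 c) _ 2 (qq r) (hb2 (qq r)) (hu2_2 r) j
    exact h.trans (Wk2_b2 c (qq r) _ j)
  have hV0 : ∀ (r : Fin R) (j),
      ((u + Bmat R * (u * Wv1 c)) * Wv2 c) ⟨3 * r.val, hr0 r⟩ j
        = oneHot3 c 0 (vv r) j := by
    intro r j
    have h := mul_row_two _ (Wv2 c) _ 0 1 (kk r) (vv r) (hb0 (kk r)) (hb1 (vv r)) (hu2_0 r) j
    rw [h, Wv2_b0 c (kk r) _ j, Wv2_b1 c (vv r) _ j, zero_add]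
  have hV1 : ∀ (r : Fin R) (j),
      ((u + Bmat R * (u * Wv1 c)) * Wv2 c) ⟨3 * r.val + 1, hr1 r⟩ j
        = oneHot3 c 0 (vv r) j := by
    intro r j
    have h := mul_row_one _ (Wv2 c) _ 1 (vv r) (hb1 (vv r)) (hu2_1 r) j
    exact h.trans (Wv2_b1 c (vv r) _ j)
  have hV2 : ∀ (r : Fin R) (j),
      ((u + Bmat R * (u * Wv1 c)) * Wv2 c) ⟨3 * r.val + 2, hr2 r⟩ j = 0 := by
    intro r j
    have h := mul_row_one _ (Wv2 c) _ 2 (qq r) (hb2 (qq r)) (hu2_2 r) j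
    exact h.trans (Wv2_b2 c (qq r) _ j)
  -- entries of S = Q * Kᵀ
  have hSq : ∀ (r s : Fin R),
      (((u + Bmat R * (u * Wv1 c)) * Wq2 c) * ((u + Bmat R * (u * Wv1 c)) * Wk2 c)ᵀ)
          ⟨3 * r.val + 2, hr2 r⟩ ⟨3 * s.val, hr0 s⟩
        = if kk s = qq r then 1 else 0 := by
    intro r s
    rw [Matrix.mul_apply]
    rw [show (∑ k, ((u + Bmat R * (u * Wv1 c)) * Wq2 c) ⟨3 * r.val + 2, hr2 r⟩ k *
          ((u + Bmat R * (u * Wv1 c)) * Wk2 c)ᵀ k ⟨3 * s.val, hr0 s⟩)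
        = ∑ k, oneHot3 c 0 (qq r) k * oneHot3 c 0 (kk s) k from
      Finset.sum_congr rfl fun k _ => by
        rw [Matrix.transpose_apply, hQ2 r k, hK0 s k]]
    rw [oneHot3_dot c 0 (qq r) (hb0 (qq r))]
    have hq := (qq r).isLt
    by_cases h : kk s = qq r
    · rw [if_pos h]
      simp [oneHot3, h]
    · rw [if_neg h]
      simp only [oneHot3, Fin.val_mk]
      rw [if_neg]
      intro hh
      exact h (Fin.ext (by omega))
  have hSK1 : ∀ (i : Fin (3 * R)) (s : Fin R),
      (((u + Bmat R * (u * Wv1 c)) * Wq2 c) * ((u + Bmat R * (u * Wv1 c)) * Wk2 c)ᵀ)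
          i ⟨3 * s.val + 1, hr1 s⟩ = 0 := by
    intro i s
    rw [Matrix.mul_apply]
    refine Finset.sum_eq_zero fun k _ => ?_
    rw [Matrix.transpose_apply, hK1 s k, mul_zero]
  have hSK2 : ∀ (i : Fin (3 * R)) (s : Fin R),
      (((u + Bmat R * (u * Wv1 c)) * Wq2 c) * ((u + Bmat R * (u * Wv1 c)) * Wk2 c)ᵀ)
          i ⟨3 * s.val + 2, hr2 s⟩ = 0 := by
    intro i s
    rw [Matrix.mul_apply]
    refine Finset.sum_eq_zero fun k _ => ?_
    rw [Matrix.transpose_apply, hK2 s k, mul_zero]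
  have hSrow0 : ∀ (i : Fin (3 * R)),
      (∀ j, ((u + Bmat R * (u * Wv1 c)) * Wq2 c) i j = 0) → ∀ l,
      (((u + Bmat R * (u * Wv1 c)) * Wq2 c) * ((u + Bmat R * (u * Wv1 c)) * Wk2 c)ᵀ)
          i l = 0 := by
    intro i hQi l
    rw [Matrix.mul_apply]
    exact Finset.sum_eq_zero fun k _ => by rw [hQi k, zero_mul]
  -- conclusions
  refine ⟨?_, ?_⟩
  · intro r
    constructor
    · intro j0 hj0
      funext j
      rw [Matrix.mul_apply]
      rw [Finset.sum_eq_single (⟨3 * j0.val, hr0 j0⟩ : Fin (3 * R))]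
      · rw [hSq r j0, if_pos hj0, one_mul]
        exact hV0 j0 j
      · intro l _ hl
        obtain ⟨s, hs | hs | hs⟩ := tri R l
        · have hls : l = ⟨3 * s.val, hr0 s⟩ := Fin.ext hs
          subst hls
          have hsj : s ≠ j0 := fun hh => hl (by rw [hh])
          rw [hSq r s, if_neg (fun hh => hsj (hinj (hh.trans hj0.symm))), zero_mul]
        · have hls : l = ⟨3 * s.val + 1, hr1 s⟩ := Fin.ext hs
          subst hls
          rw [hSK1, zero_mul]
        · have hls : l = ⟨3 * s.val + 2, hr2 s⟩ := Fin.ext hs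
          subst hls
          rw [hSK2, zero_mul]
      · intro h; exact absurd (Finset.mem_univ _) h
    · intro hno
      funext j
      rw [Matrix.mul_apply]
      refine Finset.sum_eq_zero fun l _ => ?_
      obtain ⟨s, hs | hs | hs⟩ := tri R l
      · have hls : l = ⟨3 * s.val, hr0 s⟩ := Fin.ext hs
        subst hls
        rw [hSq r s, if_neg (fun hh => hno ⟨s, hh⟩), zero_mul]
      · have hls : l = ⟨3 * s.val + 1, hr1 s⟩ := Fin.ext hs
        subst hls
        rw [hSK1, zero_mul]
      · have hls : l = ⟨3 * s.val + 2, hr2 s⟩ := Fin.ext hs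
        subst hls
        rw [hSK2, zero_mul]
  · intro i hi
    have hQi : ∀ j, ((u + Bmat R * (u * Wv1 c)) * Wq2 c) i j = 0 := by
      obtain ⟨s, hs | hs | hs⟩ := tri R i
      · have : i = ⟨3 * s.val, hr0 s⟩ := Fin.ext hs
        subst this
        exact hQ0 s
      · have : i = ⟨3 * s.val + 1, hr1 s⟩ := Fin.ext hs
        subst this
        exact hQ1 s
      · exact absurd ⟨s, hs⟩ hi
    funext j
    rw [Matrix.mul_apply]
    exact Finset.sum_eq_zero fun l _ => by rw [hSrow0 i hQi l, zero_mul]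
end

section
/- Fix c ≥ 1 and N divisible by 3, and let u ∈ {0,1}^{N×c} be a matrix each of whose rows is a standard basis vector of ℝ^c; call rows with index ≡ 0 mod 3 key rows, rows ≡ 1 mod 3 value rows, and rows ≡ 2 mod 3 query rows. Let K, Q, V ∈ ℝ^{N×c} be obtained from u by zeroing out all non-key, non-query, and non-value rows respectively. Fix s with 0 < s < N. Define y = Q ⊙ shift_down(K, s); define E ∈ ℝ^{N×c} by E[i,:] = the all-ones row if y[i,:] ≠ 0 and the zero row otherwise; and define z = E ⊙ shift_down(V, s−1). Then for every index i: if i is a query row, i − s ≥ 0 is a key row, and u[i,:] = u[i−s,:], then z[i,:] = u[i−s+1,:] (the value row immediately following the matching key); otherwise z[i,:] = 0. -/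
open Matrix

/-- Keep only key rows (index ≡ 0 mod 3) of `u`, zeroing the rest. -/
noncomputable def keyMask {N c : ℕ} (u : Matrix (Fin N) (Fin c) ℝ) :
    Matrix (Fin N) (Fin c) ℝ :=
  Matrix.of fun i j => if i.val % 3 = 0 then u i j else 0

/-- Keep only value rows (index ≡ 1 mod 3) of `u`, zeroing the rest. -/
noncomputable def valMask {N c : ℕ} (u : Matrix (Fin N) (Fin c) ℝ) :
    Matrix (Fin N) (Fin c) ℝ :=
  Matrix.of fun i j => if i.val % 3 = 1 then u i j else 0

/-- Keep only query rows (index ≡ 2 mod 3) of `u`, zeroing the rest. -/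
noncomputable def queryMask {N c : ℕ} (u : Matrix (Fin N) (Fin c) ℝ) :
    Matrix (Fin N) (Fin c) ℝ :=
  Matrix.of fun i j => if i.val % 3 = 2 then u i j else 0

/-- `y = Q ⊙ shift_down(K, s)`. -/
noncomputable def yMat {N c : ℕ} (u : Matrix (Fin N) (Fin c) ℝ) (s : ℕ) :
    Matrix (Fin N) (Fin c) ℝ :=
  Matrix.hadamard (queryMask u) (shiftDown (keyMask u) s)

/-- `z = E ⊙ shift_down(V, s − 1)`. -/
noncomputable def zMat {N c : ℕ} (u E : Matrix (Fin N) (Fin c) ℝ) (s : ℕ) :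
    Matrix (Fin N) (Fin c) ℝ :=
  Matrix.hadamard E (shiftDown (valMask u) (s - 1))

/-- Single-distance MQAR via gated shifts: with `E` the row-wise indicator of
`y = Q ⊙ shift_down(K, s)` being nonzero and `z = E ⊙ shift_down(V, s−1)`, each
query row `i` with a matching key at distance `s` outputs the associated value
`u[i−s+1,:]`, and all other rows of `z` are zero. -/
theorem stmt_16 (c R s : ℕ) (hc : 1 ≤ c) (hs0 : 0 < s) (hsN : s < 3 * R)
    (u : Matrix (Fin (3 * R)) (Fin c) ℝ)
    (hu : ∀ i, ∃ k : Fin c, u i = Pi.single k 1)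
    (E : Matrix (Fin (3 * R)) (Fin c) ℝ)
    (hE1 : ∀ i, yMat u s i ≠ 0 → E i = fun _ => 1)
    (hE2 : ∀ i, yMat u s i = 0 → E i = 0) :
    ∀ i : Fin (3 * R),
      ((i.val % 3 = 2 ∧ s ≤ i.val ∧ (i.val - s) % 3 = 0 ∧
          u i = u ⟨i.val - s, lt_of_le_of_lt (Nat.sub_le _ _) i.isLt⟩) →
        zMat u E s i = u ⟨i.val - s + 1, by have := i.isLt; omega⟩) ∧
      (¬(i.val % 3 = 2 ∧ s ≤ i.val ∧ (i.val - s) % 3 = 0 ∧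
          u i = u ⟨i.val - s, lt_of_le_of_lt (Nat.sub_le _ _) i.isLt⟩) →
        zMat u E s i = 0) := by
  intro i
  have hy : ∀ j, yMat u s i j =
      (if i.val % 3 = 2 then u i j else 0) *
      (if h : s ≤ i.val then
        (if (i.val - s) % 3 = 0 then u ⟨i.val - s, lt_of_le_of_lt (Nat.sub_le _ _) i.isLt⟩ j else 0)
      else 0) := by
    intro j
    simp only [yMat, Matrix.hadamard, queryMask, keyMask, shiftDown, Matrix.of_apply]
  constructor
  · rintro ⟨h2, hsi, h0, hequ⟩
    -- y i ≠ 0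
    obtain ⟨k, hk⟩ := hu i
    have hyne : yMat u s i ≠ 0 := by
      intro hzero
      have := congrFun hzero k
      rw [hy k, hequ] at this
      simp [h2, hsi, h0, ← hequ, hk] at this
    have hEi := hE1 i hyne
    funext j
    have hs1 : s - 1 ≤ i.val := by omega
    have heq : i.val - (s - 1) = i.val - s + 1 := by omega
    have hmod : (i.val - s + 1) % 3 = 1 := by omega
    simp only [zMat, Matrix.hadamard, hEi, shiftDown, valMask, Matrix.of_apply, hs1, dif_pos]
    simp [heq, hmod]
  · intro hnot
    have hy0 : yMat u s i = 0 := by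
      funext j
      rw [hy j]
      by_cases h2 : i.val % 3 = 2
      · by_cases hsi : s ≤ i.val
        · by_cases h0 : (i.val - s) % 3 = 0
          · -- then u i ≠ u ⟨i-s⟩
            have hne : u i ≠ u ⟨i.val - s, lt_of_le_of_lt (Nat.sub_le _ _) i.isLt⟩ := by
              intro h; exact hnot ⟨h2, hsi, h0, h⟩
            obtain ⟨k, hk⟩ := hu i
            obtain ⟨k', hk'⟩ := hu ⟨i.val - s, lt_of_le_of_lt (Nat.sub_le _ _) i.isLt⟩
            have hkk : k ≠ k' := by
              intro h; apply hne; rw [hk, hk', h]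
            simp only [h2, if_true, hsi, dif_pos, h0, if_true, hk, hk']
            rcases eq_or_ne j k with rfl | hjk
            · simp [Pi.single_eq_of_ne hkk]
            · simp [Pi.single_eq_of_ne hjk]
          · simp [h2, hsi, h0]
        · simp [hsi]
      · simp [h2]
    have hEi := hE2 i hy0
    funext j
    simp only [zMat, Matrix.hadamard]
    have : E i j = 0 := congrFun hEi j
    simp [this]
end
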